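/- Every 2-elementary abelian subgroup of PGL₂(F_q), for q an odd prime power, has order at most 4, i.e., is isomorphic to a subgroup of (Z/2Z)². -/
import Mathlib

open Matrix

section Aux
variable {F : Type*} [Field F]


lemma aux_mem_center_iff (g : GL (Fin 2) F) :
    g ∈ Subgroup.center (GL (Fin 2) F) ↔ ∃ r : F, (g : Matrix (Fin 2) (Fin 2) F) = r • 1 := by
  constructor
  · intro hg
    rw [Subgroup.mem_center_iff] at hg
    set U : GL (Fin 2) F := ⟨!![1,1;0,1], !![1,-1;0,1], by norm_num [Matrix.mul_fin_two, ← Matrix.ext_iff, Fin.forall_fin_two], by norm_num [Matrix.mul_fin_two, ← Matrix.ext_iff, Fin.forall_fin_two]⟩ with hU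
    set L : GL (Fin 2) F := ⟨!![1,0;1,1], !![1,0;-1,1], by norm_num [Matrix.mul_fin_two, ← Matrix.ext_iff, Fin.forall_fin_two], by norm_num [Matrix.mul_fin_two, ← Matrix.ext_iff, Fin.forall_fin_two]⟩ with hL
    have hu := congrArg Units.val (hg U)
    have hl := congrArg Units.val (hg L)
    simp only [Units.val_mul, hU, hL] at hu hl
    refine ⟨g.val 0 0, ?_⟩
    have hu00 := congrFun (congrFun hu 0) 0
    have hu01 := congrFun (congrFun hu 0) 1
    have hl00 := congrFun (congrFun hl 0) 0
    simp [Matrix.mul_apply, Fin.sum_univ_two] at hu00 hu01 hl00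
    have h11 : g.val 1 1 = g.val 0 0 := by linear_combination hu01
    rw [Matrix.eta_fin_two g.val, hu00, hl00, h11]
    ext i j
    fin_cases i <;> fin_cases j <;> simp [Matrix.one_apply]
  · rintro ⟨r, hr⟩
    rw [Subgroup.mem_center_iff]
    intro h
    ext : 1
    simp only [Units.val_mul, hr]
    simp [Matrix.smul_mul, Matrix.mul_smul]


lemma aux_trace_zero (A : Matrix (Fin 2) (Fin 2) F) (α : F) (h : A * A = α • 1)
    (hns : ∀ r : F, A ≠ r • 1) : A 1 1 = - A 0 0 := by
  have e01 := congrFun (congrFun h 0) 1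
  have e10 := congrFun (congrFun h 1) 0
  have e00 := congrFun (congrFun h 0) 0
  have e11 := congrFun (congrFun h 1) 1
  simp [Matrix.mul_apply, Fin.sum_univ_two, Matrix.one_apply] at e01 e10 e00 e11
  by_contra hs
  have hsum : A 0 0 + A 1 1 ≠ 0 := fun hh => hs (by linear_combination hh)
  have hb : A 0 1 = 0 := by
    rcases mul_eq_zero.mp (show A 0 1 * (A 0 0 + A 1 1) = 0 by linear_combination e01) with h' | h'
    · exact h'
    · exact absurd h' hsum
  have hc : A 1 0 = 0 := by
    rcases mul_eq_zero.mp (show A 1 0 * (A 0 0 + A 1 1) = 0 by linear_combination e10) with h' | h'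
    · exact h'
    · exact absurd h' hsum
  have had : A 0 0 = A 1 1 := by
    rcases mul_eq_zero.mp (show (A 0 0 - A 1 1) * (A 0 0 + A 1 1) = 0 by
      linear_combination e00 - e11) with h' | h'
    · linear_combination h'
    · exact absurd h' hsum
  refine hns (A 0 0) ?_
  rw [Matrix.eta_fin_two A, hb, hc, ← had]
  ext i j
  fin_cases i <;> fin_cases j <;> simp [Matrix.one_apply]

lemma aux_commute_scalar (htwo : (2:F) ≠ 0) (A B : Matrix (Fin 2) (Fin 2) F)
    (hdet : A.det ≠ 0) (hA : A 1 1 = -A 0 0) (hB : B 1 1 = -B 0 0)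
    (hcomm : A * B = B * A) : ∃ μ : F, B = μ • A := by
  have e00 := congrFun (congrFun hcomm 0) 0
  have e01 := congrFun (congrFun hcomm 0) 1
  have e10 := congrFun (congrFun hcomm 1) 0
  simp [Matrix.mul_apply, Fin.sum_univ_two] at e00 e01 e10
  rw [Matrix.det_fin_two, hA] at hdet
  rw [hA, hB] at e01 e10
  set a := A 0 0; set b := A 0 1; set c := A 1 0
  set e := B 0 0; set f := B 0 1; set g := B 1 0
  have hbg : b * g = f * c := by linear_combination e00
  have haf : a * f = b * e := by
    have h2 : 2 * (a * f - b * e) = 0 := by linear_combination e01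
    rcases mul_eq_zero.mp h2 with h' | h'
    · exact absurd h' htwo
    · linear_combination h'
  have hag : a * g = c * e := by
    have h2 : 2 * (c * e - a * g) = 0 := by linear_combination e10
    rcases mul_eq_zero.mp h2 with h' | h'
    · exact absurd h' htwo
    · linear_combination -h'
  by_cases ha : a = 0
  · have hbc : b * c ≠ 0 := by
      intro hh; apply hdet; rw [ha]; ring_nf; linear_combination -hh
    have hb : b ≠ 0 := fun hh => hbc (by rw [hh]; ring)
    have he : e = 0 := by
      rcases mul_eq_zero.mp (show b * e = 0 by rw [← haf, ha]; ring) with h' | h'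
      · exact absurd h' hb
      · exact h'
    refine ⟨f / b, ?_⟩
    rw [Matrix.eta_fin_two B, Matrix.eta_fin_two A]
    ext i j
    fin_cases i <;> fin_cases j <;>
      simp only [Matrix.smul_apply, Matrix.cons_val', Matrix.cons_val_zero, Matrix.cons_val_one,
        Matrix.head_cons, Matrix.head_fin_const, Matrix.empty_val', Matrix.cons_val_fin_one,
        smul_eq_mul]
    · show e = f / b * a; rw [he, ha]; ring
    · show f = f / b * b; rw [div_mul_cancel₀ _ hb]
    · show g = f / b * c; rw [div_mul_eq_mul_div, eq_div_iff hb]; linear_combination hbg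
    · show B 1 1 = f / b * A 1 1; rw [hB, hA, he, ha]; ring
  · refine ⟨e / a, ?_⟩
    rw [Matrix.eta_fin_two B, Matrix.eta_fin_two A]
    ext i j
    fin_cases i <;> fin_cases j <;>
      simp only [Matrix.smul_apply, Matrix.cons_val', Matrix.cons_val_zero, Matrix.cons_val_one,
        Matrix.head_cons, Matrix.head_fin_const, Matrix.empty_val', Matrix.cons_val_fin_one,
        smul_eq_mul]
    · show e = e / a * a; rw [div_mul_cancel₀ _ ha]
    · show f = e / a * b; rw [div_mul_eq_mul_div, eq_div_iff ha]; linear_combination haf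
    · show g = e / a * c; rw [div_mul_eq_mul_div, eq_div_iff ha]; linear_combination hag
    · show B 1 1 = e / a * A 1 1; rw [hB, hA, mul_neg, div_mul_cancel₀ _ ha]

local notation "Q" => GL (Fin 2) F ⧸ Subgroup.center (GL (Fin 2) F)

lemma aux_trace_zero_of_invol (A : GL (Fin 2) F)
    (hA1 : (QuotientGroup.mk A : Q) ≠ 1) (hAsq : (QuotientGroup.mk A : Q) ^ 2 = 1) :
    (A : Matrix (Fin 2) (Fin 2) F) 1 1 = - (A : Matrix (Fin 2) (Fin 2) F) 0 0 := by
  have h1 : A ^ 2 ∈ Subgroup.center (GL (Fin 2) F) := by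
    rw [← QuotientGroup.eq_one_iff]
    simpa using hAsq
  obtain ⟨α, hα⟩ := (aux_mem_center_iff (A ^ 2)).mp h1
  rw [Units.val_pow_eq_pow_val, sq] at hα
  refine aux_trace_zero _ α hα ?_
  intro r hr
  exact hA1 (QuotientGroup.eq_one_iff _ |>.mpr ((aux_mem_center_iff A).mpr ⟨r, hr⟩))

lemma aux_anticommute (htwo : (2:F) ≠ 0) (A C : GL (Fin 2) F)
    (hA1 : (QuotientGroup.mk A : Q) ≠ 1) (hC1 : (QuotientGroup.mk C : Q) ≠ 1)
    (hAsq : (QuotientGroup.mk A : Q) ^ 2 = 1) (hCsq : (QuotientGroup.mk C : Q) ^ 2 = 1)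
    (hne : (QuotientGroup.mk A : Q) ≠ QuotientGroup.mk C)
    (hcomm : (QuotientGroup.mk A : Q) * QuotientGroup.mk C
      = QuotientGroup.mk C * QuotientGroup.mk A) :
    (A : Matrix (Fin 2) (Fin 2) F) * C = -((C : Matrix (Fin 2) (Fin 2) F) * A) := by
  have trA := aux_trace_zero_of_invol A hA1 hAsq
  have trC := aux_trace_zero_of_invol C hC1 hCsq
  have hcen : (A * C)⁻¹ * (C * A) ∈ Subgroup.center (GL (Fin 2) F) := by
    rw [← QuotientGroup.eq]
    simpa using hcomm
  obtain ⟨l, hl⟩ := (aux_mem_center_iff _).mp hcen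
  have hCA : (C : Matrix (Fin 2) (Fin 2) F) * A
      = l • ((A : Matrix (Fin 2) (Fin 2) F) * C) := by
    have h : (C * A : GL (Fin 2) F) = (A * C) * ((A * C)⁻¹ * (C * A)) :=
      (mul_inv_cancel_left _ _).symm
    have hval := congrArg Units.val h
    simp only [Units.val_mul, hl] at hval
    rw [hval, Matrix.mul_smul, mul_one]
  have hdetA : (A : Matrix (Fin 2) (Fin 2) F).det ≠ 0 :=
    ((Matrix.isUnit_iff_isUnit_det _).mp A.isUnit).ne_zero
  have hdetC : (C : Matrix (Fin 2) (Fin 2) F).det ≠ 0 :=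
    ((Matrix.isUnit_iff_isUnit_det _).mp C.isUnit).ne_zero
  have hdet : (C : Matrix (Fin 2) (Fin 2) F).det * A.val.det
      = l ^ 2 * ((A : Matrix (Fin 2) (Fin 2) F).det * C.val.det) := by
    have h := congrArg Matrix.det hCA
    rwa [Matrix.det_mul, Matrix.det_smul, Matrix.det_mul, Fintype.card_fin] at h
  have hl2 : l = 1 ∨ l = -1 := by
    have h0 : (1 - l ^ 2) * ((A : Matrix (Fin 2) (Fin 2) F).det * C.val.det) = 0 := by
      linear_combination hdet
    rcases mul_eq_zero.mp h0 with h' | h'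
    · have hsq : l ^ 2 = 1 := by linear_combination -h'
      have : (l - 1) * (l + 1) = 0 := by linear_combination hsq
      rcases mul_eq_zero.mp this with h'' | h''
      · left; linear_combination h''
      · right; linear_combination h''
    · exact absurd h' (mul_ne_zero hdetA hdetC)
  rcases hl2 with h1 | h1
  · exfalso
    rw [h1, one_smul] at hCA
    obtain ⟨μ, hμ⟩ := aux_commute_scalar htwo A.val C.val hdetA trA trC hCA.symm
    apply hne
    rw [QuotientGroup.eq]
    refine (aux_mem_center_iff _).mpr ⟨μ, ?_⟩
    show (A⁻¹ : GL (Fin 2) F).val * C.val = μ • 1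
    rw [hμ, Matrix.mul_smul]
    congr 1
    exact A.inv_mul
  · rw [h1] at hCA
    rw [hCA]
    simp

lemma aux_key (htwo : (2:F) ≠ 0) (a b c : Q)
    (ha1 : a ≠ 1) (hb1 : b ≠ 1) (hab1 : a * b ≠ 1) (hc1 : c ≠ 1)
    (ha : a ^ 2 = 1) (hb : b ^ 2 = 1) (hc : c ^ 2 = 1) (hab : (a * b) ^ 2 = 1)
    (hca : c ≠ a) (hcb : c ≠ b) (hcab : c ≠ a * b)
    (hcomma : c * a = a * c) (hcommb : c * b = b * c) : False := by
  obtain ⟨A, rfl⟩ := QuotientGroup.mk_surjective a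
  obtain ⟨B, rfl⟩ := QuotientGroup.mk_surjective b
  obtain ⟨C, rfl⟩ := QuotientGroup.mk_surjective c
  have hmkAB : (QuotientGroup.mk A : Q) * QuotientGroup.mk B = QuotientGroup.mk (A * B) := rfl
  have h1 := aux_anticommute htwo A C ha1 hc1 ha hc (Ne.symm hca) hcomma.symm
  have h2 := aux_anticommute htwo B C hb1 hc1 hb hc (Ne.symm hcb) hcommb.symm
  have hcommab : (QuotientGroup.mk (A * B) : Q) * QuotientGroup.mk C
      = QuotientGroup.mk C * QuotientGroup.mk (A * B) := by
    rw [← hmkAB, mul_assoc, ← hcommb, ← mul_assoc, ← hcomma, mul_assoc]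
  have hab1' : (QuotientGroup.mk (A * B) : Q) ≠ 1 := by rw [← hmkAB]; exact hab1
  have hab' : (QuotientGroup.mk (A * B) : Q) ^ 2 = 1 := by rw [← hmkAB]; exact hab
  have hcab' : (QuotientGroup.mk (A * B) : Q) ≠ QuotientGroup.mk C := by
    rw [← hmkAB]; exact Ne.symm hcab
  have h3 := aux_anticommute htwo (A * B) C hab1' hc1 hab' hc hcab' hcommab
  have hW : (A : Matrix (Fin 2) (Fin 2) F) * B * C = C.val * (A.val * B.val) := by
    calc (A : Matrix (Fin 2) (Fin 2) F) * B * C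
        = A.val * (B.val * C.val) := by rw [mul_assoc]
      _ = A.val * -(C.val * B.val) := by rw [h2]
      _ = -(A.val * C.val * B.val) := by rw [mul_neg, mul_assoc]
      _ = -(-(C.val * A.val) * B.val) := by rw [h1]
      _ = C.val * (A.val * B.val) := by rw [neg_mul, neg_neg, mul_assoc]
  have h3' : (A : Matrix (Fin 2) (Fin 2) F) * B * C = -(C.val * (A.val * B.val)) := by
    simpa [Units.val_mul] using h3
  have hzero : C.val * ((A : Matrix (Fin 2) (Fin 2) F) * B.val) = 0 := by
    have hsum : C.val * (A.val * B.val) + C.val * (A.val * B.val) = 0 := by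
      nth_rewrite 1 [← hW]
      rw [h3']
      exact neg_add_cancel _
    have h2s : (2 : F) • (C.val * ((A : Matrix (Fin 2) (Fin 2) F) * B.val)) = 0 := by
      rw [two_smul]; exact hsum
    rcases smul_eq_zero.mp h2s with h | h
    · exact absurd h htwo
    · exact h
  have hunit : IsUnit (C.val * ((A : Matrix (Fin 2) (Fin 2) F) * B.val)) := by
    have : C.val * (A.val * B.val) = ((C * (A * B) : GL (Fin 2) F) : Matrix (Fin 2) (Fin 2) F) := by
      simp [Units.val_mul]
    rw [this]
    exact (C * (A * B)).isUnit
  exact hunit.ne_zero hzero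

end Aux

/-- Every 2-elementary abelian subgroup of `PGL₂(F_q)`, for `q` an odd prime power,
has order at most 4. Here `PGL₂(F_q)` is realized as `GL₂(F_q)` modulo its center. -/
theorem stmt_7 {F : Type*} [Field F] [Fintype F] (hodd : Odd (Fintype.card F))
    (H : Subgroup (GL (Fin 2) F ⧸ Subgroup.center (GL (Fin 2) F)))
    (h2 : ∀ g ∈ H, g ^ 2 = 1) :
    Nat.card H ≤ 4 := by
  classical
  have htwo : (2:F) ≠ 0 := by
    intro h2'
    have hp : (ringChar F).Prime := CharP.char_is_prime F (ringChar F)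
    have hdvd : ringChar F ∣ 2 := by
      rw [← CharP.cast_eq_zero_iff F (ringChar F) 2]
      exact_mod_cast h2'
    have hchar2 : ringChar F = 2 := (Nat.prime_dvd_prime_iff_eq hp Nat.prime_two).mp hdvd
    obtain ⟨n, -, hcard⟩ := FiniteField.card F (ringChar F)
    rw [hchar2] at hcard
    rw [hcard] at hodd
    exact (Nat.not_even_iff_odd.mpr hodd) ((Nat.even_pow).mpr ⟨even_two, n.pos.ne'⟩)
  by_contra hlt
  push_neg at hlt
  have : Fintype ↥H := Fintype.ofFinite _
  rw [Nat.card_eq_fintype_card] at hlt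
  -- subgroup-level facts
  have hsq : ∀ u : ↥H, u ^ 2 = 1 := by
    intro u
    have := h2 ↑u u.2
    ext
    push_cast
    exact this
  have hi : ∀ u : ↥H, u⁻¹ = u := by
    intro u
    exact inv_eq_of_mul_eq_one_right (by rw [← sq]; exact hsq u)
  have hcm : ∀ u v : ↥H, u * v = v * u := by
    intro u v
    calc u * v = (u * v)⁻¹ := (hi (u*v)).symm
      _ = v⁻¹ * u⁻¹ := mul_inv_rev _ _
      _ = v * u := by rw [hi, hi]
  have hexists : ∀ s : Finset ↥H, s.card < Fintype.card ↥H → ∃ z, z ∉ s := by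
    intro s hs
    by_contra hz
    push_neg at hz
    have : (Finset.univ : Finset ↥H) ⊆ s := fun z _ => hz z
    have := Finset.card_le_card this
    rw [Finset.card_univ] at this
    omega
  obtain ⟨x, hx⟩ := hexists {1} (by
    have := Finset.card_singleton (1 : ↥H); omega)
  obtain ⟨y, hy⟩ := hexists {1, x} (by
    have := Finset.card_insert_le (1 : ↥H) {x}
    have := Finset.card_singleton x; omega)
  obtain ⟨z, hz⟩ := hexists {1, x, y, x * y} (by
    have h1 := Finset.card_insert_le (1 : ↥H) {x, y, x*y}
    have h2 := Finset.card_insert_le x {y, x*y}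
    have h3 := Finset.card_insert_le y ({x*y} : Finset ↥H)
    have := Finset.card_singleton (x*y); omega)
  simp only [Finset.mem_insert, Finset.mem_singleton, not_or] at hx hy hz
  obtain ⟨hz1, hzx, hzy, hzxy⟩ := hz
  obtain ⟨hy1, hyx⟩ := hy
  -- x*y ≠ 1
  have hxy1 : x * y ≠ 1 := by
    intro h
    have : y = x⁻¹ := eq_inv_of_mul_eq_one_left (by rw [hcm]; exact h)
    rw [hi] at this
    exact hyx this
  have coe_ne : ∀ u v : ↥H, u ≠ v → (↑u : GL (Fin 2) F ⧸ Subgroup.center (GL (Fin 2) F)) ≠ ↑v := by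
    intro u v huv h
    exact huv (Subtype.coe_injective h)
  refine aux_key htwo ↑x ↑y ↑z (coe_ne _ _ hx) (coe_ne _ _ hy1) ?_ (coe_ne _ _ hz1)
    (h2 ↑x x.2) (h2 ↑y y.2) (h2 ↑z z.2) ?_ (coe_ne _ _ hzx) (coe_ne _ _ hzy) ?_ ?_ ?_
  · have := coe_ne _ _ hxy1
    push_cast at this
    exact this
  · have := h2 ↑(x*y) (x*y).2
    push_cast at this
    exact this
  · have := coe_ne _ _ hzxy
    push_cast at this
    exact this
  · have := congrArg (Subtype.val) (hcm z x)
    push_cast at this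
    exact this
  · have := congrArg (Subtype.val) (hcm z y)
    push_cast at this
    exact this
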